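/- arXiv:2108.08968 — 3 statements merged into one kernel-verified Lean document; each statement's English description precedes it below -/
import Mathlib

section
/- Let a > b > 0 and λ ≥ max{b, a/2}. Then there is no real number r > 1 satisfying (λr − b)/(a − b) < min{1, r − 1}. -/
theorem stmt_3 (a b lam : ℝ) (hab : a > b) (hb : b > 0) (hlam : lam ≥ max b (a / 2)) :
    ¬ ∃ r : ℝ, 1 < r ∧ (lam * r - b) / (a - b) < min 1 (r - 1) := by
  rintro ⟨r, hr, h⟩
  have hab' : a - b > 0 := by linarith
  have h1 : (lam * r - b) / (a - b) < 1 := lt_of_lt_of_le h (min_le_left _ _)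
  have h2 : (lam * r - b) / (a - b) < r - 1 := lt_of_lt_of_le h (min_le_right _ _)
  rw [div_lt_one hab'] at h1
  rw [div_lt_iff₀ hab'] at h2
  have hl1 : lam ≥ b := le_trans (le_max_left _ _) hlam
  have hl2 : lam ≥ a / 2 := le_trans (le_max_right _ _) hlam
  have hr2 : r < 2 := by nlinarith
  rcases le_or_gt (2 * b) a with hc | hc
  · nlinarith
  · nlinarith
end

section
/- Let D > 0, θ > 0, r > 1, 0 < ρ < min{1, r−1}, and let δ be a random variable with CDF F(x) = (x/D)(2 − x/D) on [0, D], F(x) = 1 for x ≥ D. Set a_j = (j−1)r + ρ, b_j = j·r − ρ. If b_m < D/θ < a_{m+1} for some 1 ≤ m ≤ N−1, then P(δ ∈ ⋃_{j=1}^{N−1} (θa_j, θb_j)) = (r − 2ρ)(θ/D)(2m − (rθ/D)m²). -/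
/-!
On `[0, D)` the law of `δ` is the Stieltjes measure of `F x = (x / D) * (2 - x / D)`, which is
continuous, so an interval `(u, v) ⊆ [0, D)` has probability
`F v - F u = (v - u) / D * (2 - (u + v) / D)`. For the `j`-th interval with `j ≤ m` this is
`(r - 2ρ) (θ / D) (2 - (2j - 1) r θ / D)`, since `b_j - a_j = r - 2ρ` and `a_j + b_j = (2j - 1) r`;
the intervals with `j > m` lie beyond `D`, where `δ` has no mass. The intervals are disjoint, and
summing with `∑_{j ≤ m} (2j - 1) = m²` gives the formula.
-/

open MeasureTheory ProbabilityTheory Set Finset Function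

/-- The CDF of `|d₂ - d₁|` on `[0, D]`, for `d₁, d₂` independent and uniform on `[0, D]`. -/
noncomputable def absDiffCDF (D x : ℝ) : ℝ := x / D * (2 - x / D)

lemma absDiffCDF_sub (D u v : ℝ) :
    absDiffCDF D v - absDiffCDF D u = (v - u) / D * (2 - (u + v) / D) := by
  unfold absDiffCDF
  ring

lemma absDiffCDF_monotoneOn (D : ℝ) : MonotoneOn (absDiffCDF D) (Icc 0 D) := by
  intro u hu v hv huv
  have hD : 0 ≤ D := hu.1.trans hu.2
  have huvD : (u + v) / D ≤ 2 := div_le_of_le_mul₀ hD zero_le_two (by linarith [hu.2, hv.2])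
  rw [← sub_nonneg, absDiffCDF_sub]
  exact mul_nonneg (div_nonneg (sub_nonneg.2 huv) hD) (by linarith)

lemma absDiffCDF_nonneg {D x : ℝ} (hx : x ∈ Icc 0 D) : 0 ≤ absDiffCDF D x := by
  simpa [absDiffCDF] using absDiffCDF_monotoneOn D ⟨le_rfl, hx.1.trans hx.2⟩ hx hx.1

lemma continuous_absDiffCDF (D : ℝ) : Continuous (absDiffCDF D) := by
  unfold absDiffCDF
  fun_prop

lemma sum_Icc_two_mul_sub_one (m : ℕ) :
    ∑ j ∈ Finset.Icc 1 m, (2 * (j : ℝ) - 1) = (m : ℝ) ^ 2 := by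
  induction m with
  | zero => simp
  | succ k ih =>
    rw [sum_Icc_succ_top (Nat.le_add_left 1 k), ih]
    push_cast
    ring

lemma sum_absDiffCDF_sub (D θ r ρ : ℝ) (m : ℕ) :
    ∑ j ∈ Finset.Icc 1 m,
        (absDiffCDF D (θ * ((j : ℝ) * r - ρ)) - absDiffCDF D (θ * (((j : ℝ) - 1) * r + ρ)))
      = (r - 2 * ρ) * (θ / D) * (2 * (m : ℝ) - (r * θ / D) * (m : ℝ) ^ 2) := by
  have hterm : ∀ j : ℕ,
      absDiffCDF D (θ * ((j : ℝ) * r - ρ)) - absDiffCDF D (θ * (((j : ℝ) - 1) * r + ρ))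
        = (r - 2 * ρ) * (θ / D) * 2
          - (r - 2 * ρ) * (θ / D) * (r * θ / D) * (2 * (j : ℝ) - 1) := by
    intro j
    rw [absDiffCDF_sub]
    ring
  rw [sum_congr rfl fun j _ => hterm j, sum_sub_distrib, ← mul_sum, ← mul_sum,
    sum_Icc_two_mul_sub_one, sum_const, Nat.card_Icc, add_tsub_cancel_right, nsmul_eq_mul]
  ring

lemma measure_Ioo_eq_ofReal_cdf_sub (μ : Measure ℝ) [IsProbabilityMeasure μ] {x y : ℝ}
    (hy : ContinuousAt (cdf μ) y) : μ (Ioo x y) = ENNReal.ofReal (cdf μ y - cdf μ x) := by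
  conv_lhs => rw [← measure_cdf μ]
  rw [StieltjesFunction.measure_Ioo, hy.continuousWithinAt.leftLim_eq]

lemma pairwise_disjoint_Ioo {ι α : Type*} [LinearOrder ι] [LinearOrder α] {u v : ι → α}
    (h : ∀ i j, i < j → v i ≤ u j) : Pairwise (Disjoint on fun i => Ioo (u i) (v i)) := by
  refine (pairwise_disjoint_on _).mpr fun i j hij => ?_
  exact Set.disjoint_left.mpr fun z hi hj => lt_asymm (hi.2.trans_le (h i j hij)) hj.1

lemma cdf_eq_of_measure_Iic_eq_ofReal (μ : Measure ℝ) [IsProbabilityMeasure μ] {x c : ℝ}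
    (h : μ (Iic x) = ENNReal.ofReal c) (hc : 0 ≤ c) : cdf μ x = c := by
  rw [cdf_eq_real, measureReal_def, h, ENNReal.toReal_ofReal hc]

section AbsDiffLaw

variable {μ : Measure ℝ} [IsProbabilityMeasure μ] {D : ℝ}

lemma cdf_eq_absDiffCDF (hμ : ∀ x ∈ Ico 0 D, μ (Iic x) = ENNReal.ofReal (absDiffCDF D x))
    {x : ℝ} (hx : x ∈ Ico 0 D) : cdf μ x = absDiffCDF D x :=
  cdf_eq_of_measure_Iic_eq_ofReal μ (hμ x hx) (absDiffCDF_nonneg (Ico_subset_Icc_self hx))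

lemma measure_Ioo_eq_absDiffCDF_sub
    (hμ : ∀ x ∈ Ico 0 D, μ (Iic x) = ENNReal.ofReal (absDiffCDF D x)) {x y : ℝ}
    (hx : x ∈ Ico 0 D) (hy : y ∈ Ioo 0 D) :
    μ (Ioo x y) = ENNReal.ofReal (absDiffCDF D y - absDiffCDF D x) := by
  have hcont : ContinuousAt (cdf μ) y := by
    refine (continuous_absDiffCDF D).continuousAt.congr ?_
    filter_upwards [Ioo_mem_nhds hy.1 hy.2] with z hz
    exact (cdf_eq_absDiffCDF hμ (Ioo_subset_Ico_self hz)).symm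
  rw [measure_Ioo_eq_ofReal_cdf_sub μ hcont, cdf_eq_absDiffCDF hμ hx,
    cdf_eq_absDiffCDF hμ (Ioo_subset_Ico_self hy)]

lemma measure_biUnion_Ioo_eq_ofReal_sum
    (hμ : ∀ x ∈ Ico 0 D, μ (Iic x) = ENNReal.ofReal (absDiffCDF D x)) (hμD : μ (Ioi D) = 0)
    {u v : ℕ → ℝ} {m n : ℕ} (hmn : m ≤ n) (hdisj : ∀ i j, i < j → v i ≤ u j)
    (hin : ∀ j ∈ Finset.Icc 1 m, 0 ≤ u j ∧ u j < v j ∧ v j < D) (hout : ∀ j, m < j → D ≤ u j) :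
    μ (⋃ j ∈ Finset.Icc 1 n, Ioo (u j) (v j))
      = ENNReal.ofReal (∑ j ∈ Finset.Icc 1 m, (absDiffCDF D (v j) - absDiffCDF D (u j))) := by
  have hbeyond : ∀ j ∈ Finset.Icc 1 n, j ∉ Finset.Icc 1 m → μ (Ioo (u j) (v j)) = 0 := by
    intro j hj hjm
    have hmj : m < j := by simp only [Finset.mem_Icc] at hj hjm; omega
    exact measure_mono_null (fun z hz => (hout j hmj).trans_lt hz.1) hμD
  rw [measure_biUnion_finset ((pairwise_disjoint_Ioo hdisj).set_pairwise _)
      (fun _ _ => measurableSet_Ioo),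
    ← sum_subset (Finset.Icc_subset_Icc le_rfl hmn) hbeyond, ENNReal.ofReal_sum_of_nonneg]
  · refine sum_congr rfl fun j hj => ?_
    obtain ⟨hu, huv, hvD⟩ := hin j hj
    exact measure_Ioo_eq_absDiffCDF_sub hμ ⟨hu, huv.trans hvD⟩ ⟨hu.trans_lt huv, hvD⟩
  · intro j hj
    obtain ⟨hu, huv, hvD⟩ := hin j hj
    exact sub_nonneg.2 <| absDiffCDF_monotoneOn D ⟨hu, (huv.trans hvD).le⟩
      ⟨hu.trans huv.le, hvD.le⟩ huv.le

end AbsDiffLaw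

theorem stmt_9_general {Ω : Type*} [MeasurableSpace Ω] (P : Measure Ω) [IsProbabilityMeasure P]
    (D θ r ρ : ℝ) (hθ : 0 < θ) (hρ0 : 0 < ρ)
    (hρ : ρ < min 1 (r - 1))
    (δ : Ω → ℝ) (hδ : Measurable δ)
    (hcdf₁ : ∀ x : ℝ, 0 ≤ x → x < D → P {ω | δ ω ≤ x} = ENNReal.ofReal ((x / D) * (2 - x / D)))
    (hcdf₂ : ∀ x : ℝ, D ≤ x → P {ω | δ ω ≤ x} = 1)
    (a b : ℕ → ℝ)
    (ha : ∀ j : ℕ, a j = ((j : ℝ) - 1) * r + ρ)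
    (hb : ∀ j : ℕ, b j = (j : ℝ) * r - ρ)
    (N m : ℕ) (hm2 : m ≤ N - 1)
    (hlo : b m < D / θ) (hhi : D / θ < a (m + 1)) :
    P {ω | δ ω ∈ ⋃ j ∈ Finset.Icc 1 (N - 1), Set.Ioo (θ * a j) (θ * b j)}
      = ENNReal.ofReal ((r - 2 * ρ) * (θ / D) * (2 * (m : ℝ) - (r * θ / D) * (m : ℝ) ^ 2)) := by
  obtain ⟨hρ1, hρr⟩ := lt_min_iff.mp hρ
  obtain rfl : a = _ := funext ha
  obtain rfl : b = _ := funext hb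
  beta_reduce at hlo hhi ⊢
  have : IsProbabilityMeasure (P.map δ) := Measure.isProbabilityMeasure_map hδ.aemeasurable
  have hμ : ∀ x ∈ Ico 0 D, P.map δ (Iic x) = ENNReal.ofReal (absDiffCDF D x) := fun x hx =>
    (Measure.map_apply hδ measurableSet_Iic).trans (hcdf₁ x hx.1 hx.2)
  have hμD : P.map δ (Ioi D) = 0 := by
    rw [← compl_Iic, prob_compl_eq_zero_iff measurableSet_Iic,
      Measure.map_apply hδ measurableSet_Iic]
    exact hcdf₂ D le_rfl
  show P (δ ⁻¹' _) = _
  rw [← Measure.map_apply hδ (Finset.measurableSet_biUnion _ fun _ _ => measurableSet_Ioo),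
    measure_biUnion_Ioo_eq_ofReal_sum hμ hμD hm2 (fun i j hij => ?_) (fun j hj => ?_)
      (fun j hj => ?_), sum_absDiffCDF_sub]
  · have hij' : (i : ℝ) + 1 ≤ j := by exact_mod_cast hij
    exact mul_le_mul_of_nonneg_left (by nlinarith) hθ.le
  · have hj₁ : (1 : ℝ) ≤ j := by exact_mod_cast (Finset.mem_Icc.mp hj).1
    have hjm : (j : ℝ) ≤ m := by exact_mod_cast (Finset.mem_Icc.mp hj).2
    have hbj : (j : ℝ) * r - ρ < D / θ := lt_of_le_of_lt (by nlinarith) hlo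
    rw [lt_div_iff₀' hθ] at hbj
    exact ⟨mul_nonneg hθ.le (by nlinarith), mul_lt_mul_of_pos_left (by linarith) hθ, hbj⟩
  · have hmj : (m : ℝ) + 1 ≤ j := by exact_mod_cast hj
    have haj : D / θ < ((j : ℝ) - 1) * r + ρ := hhi.trans_le (by push_cast; nlinarith)
    exact ((div_lt_iff₀' hθ).mp haj).le

theorem stmt_9 {Ω : Type*} [MeasurableSpace Ω] (P : Measure Ω) [IsProbabilityMeasure P]
    (D θ r ρ : ℝ) (hD : 0 < D) (hθ : 0 < θ) (hr : 1 < r) (hρ0 : 0 < ρ)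
    (hρ : ρ < min 1 (r - 1))
    (δ : Ω → ℝ) (hδ : Measurable δ)
    (hcdf₁ : ∀ x : ℝ, 0 ≤ x → x < D → P {ω | δ ω ≤ x} = ENNReal.ofReal ((x / D) * (2 - x / D)))
    (hcdf₂ : ∀ x : ℝ, D ≤ x → P {ω | δ ω ≤ x} = 1)
    (a b : ℕ → ℝ)
    (ha : ∀ j : ℕ, a j = ((j : ℝ) - 1) * r + ρ)
    (hb : ∀ j : ℕ, b j = (j : ℝ) * r - ρ)
    (N m : ℕ) (hm1 : 1 ≤ m) (hm2 : m ≤ N - 1) (hN : 2 ≤ N)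
    (hlo : b m < D / θ) (hhi : D / θ < a (m + 1)) :
    P {ω | δ ω ∈ ⋃ j ∈ Finset.Icc 1 (N - 1), Set.Ioo (θ * a j) (θ * b j)}
      = ENNReal.ofReal ((r - 2 * ρ) * (θ / D) * (2 * (m : ℝ) - (r * θ / D) * (m : ℝ) ^ 2)) :=
  stmt_9_general P D θ r ρ hθ hρ0 hρ δ hδ hcdf₁ hcdf₂ a b ha hb N m hm2 hlo hhi
end

section
/- Let D > 0, θ > 0, r > 1, 0 < ρ < min{1, r−1}, and let δ be a random variable with CDF F(x) = (x/D)(2 − x/D) on [0, D], F(x) = 1 for x ≥ D. Set a_j = (j−1)r + ρ, b_j = j·r − ρ. If a_m < D/θ < b_m for some 1 ≤ m ≤ N−1, then P(δ ∈ ⋃_{j=1}^{N−1} (θa_j, θb_j)) = (r − 2ρ)(θ/D)(2(m−1) − (rθ/D)(m−1)²) + (1 − θa_m/D)². -/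
/-!
The hypotheses determine the law of `δ` completely: its CDF is `G x = t (2 - t)` with
`t = x / D` clamped to `[0, 1]` (below `0` it vanishes because `G 0 = 0`). Since `G` is
continuous, each open interval has probability `G d - G c`, and the intervals `θ (a_j, b_j)`
are pairwise disjoint, so the probability is `∑ j, (G (θ b_j) - G (θ a_j))`. For `j < m` the
interval lies in `[0, D]` and these terms sum to the quadratic in `m - 1` by induction; the
`m`-th interval contains `D` and contributes `1 - G (θ a_m) = (1 - θ a_m / D)²`; the intervals
with `j > m` lie beyond `D` and contribute nothing.
-/

open MeasureTheory ProbabilityTheory Finset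

noncomputable def distCdf (D x : ℝ) : ℝ :=
  let t := max 0 (min 1 (x / D))
  t * (2 - t)

def admissibleLeft (r ρ : ℝ) (j : ℕ) : ℝ := ((j : ℝ) - 1) * r + ρ

def admissibleRight (r ρ : ℝ) (j : ℕ) : ℝ := (j : ℝ) * r - ρ

section distCdf

variable {D : ℝ}

theorem continuous_distCdf : Continuous (distCdf D) := by
  unfold distCdf; fun_prop

theorem distCdf_of_mem (hD : 0 < D) {x : ℝ} (hx : 0 ≤ x) (hxD : x ≤ D) :
    distCdf D x = x / D * (2 - x / D) := by
  have h : max 0 (min 1 (x / D)) = x / D := by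
    rw [min_eq_right ((div_le_one hD).2 hxD), max_eq_right (div_nonneg hx hD.le)]
  simp only [distCdf, h]

theorem distCdf_of_nonpos (hD : 0 < D) {x : ℝ} (hx : x ≤ 0) : distCdf D x = 0 := by
  have h : max 0 (min 1 (x / D)) = 0 :=
    max_eq_left ((min_le_right _ _).trans (div_nonpos_of_nonpos_of_nonneg hx hD.le))
  simp only [distCdf, h]; ring

theorem distCdf_of_le (hD : 0 < D) {x : ℝ} (hx : D ≤ x) : distCdf D x = 1 := by
  have h : max 0 (min 1 (x / D)) = 1 := by
    rw [min_eq_left ((one_le_div hD).2 hx), max_eq_right zero_le_one]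
  simp only [distCdf, h]; ring

end distCdf

theorem measure_Ioo_eq_ofReal_cdf_sub_s10 {μ : Measure ℝ} [IsProbabilityMeasure μ]
    (hμ : Continuous (cdf μ)) (c d : ℝ) : μ (Set.Ioo c d) = ENNReal.ofReal (cdf μ d - cdf μ c) := by
  have h := (cdf μ).measure_Ioo (a := c) (b := d)
  rwa [measure_cdf, hμ.continuousWithinAt.leftLim_eq] at h

theorem measure_biUnion_Ioo_eq_ofReal_sum_cdf {μ : Measure ℝ} [IsProbabilityMeasure μ]
    (hμ : Continuous (cdf μ)) {ι : Type*} (s : Finset ι) {c d : ι → ℝ}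
    (hdisj : (s : Set ι).PairwiseDisjoint fun j ↦ Set.Ioo (c j) (d j)) (hcd : ∀ j ∈ s, c j ≤ d j) :
    μ (⋃ j ∈ s, Set.Ioo (c j) (d j)) = ENNReal.ofReal (∑ j ∈ s, (cdf μ (d j) - cdf μ (c j))) := by
  rw [measure_biUnion_finset hdisj fun _ _ ↦ measurableSet_Ioo,
    ENNReal.ofReal_sum_of_nonneg fun j hj ↦ sub_nonneg.2 (monotone_cdf μ (hcd j hj))]
  exact sum_congr rfl fun j _ ↦ measure_Ioo_eq_ofReal_cdf_sub_s10 hμ _ _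

theorem pairwiseDisjoint_Ioo_of_le {ι α : Type*} [LinearOrder ι] [Preorder α] {s : Set ι}
    {c d : ι → α} (h : ∀ i j, i < j → d i ≤ c j) : s.PairwiseDisjoint fun j ↦ Set.Ioo (c j) (d j) := by
  refine ((pairwise_disjoint_on _).2 fun i j hij ↦ Set.disjoint_left.2 ?_).set_pairwise s
  intro x hi hj
  exact (hi.2.trans_le (h i j hij)).not_ge hj.1.le

theorem cdf_map_eq_distCdf {Ω : Type*} [MeasurableSpace Ω] {P : Measure Ω}
    [IsProbabilityMeasure P] {D : ℝ} (hD : 0 < D) {δ : Ω → ℝ} (hδ : Measurable δ)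
    (hcdf₁ : ∀ x : ℝ, 0 ≤ x → x < D → P {ω | δ ω ≤ x} = ENNReal.ofReal ((x / D) * (2 - x / D)))
    (hcdf₂ : ∀ x : ℝ, D ≤ x → P {ω | δ ω ≤ x} = 1) :
    cdf (P.map δ) = distCdf D := by
  have : IsProbabilityMeasure (P.map δ) := Measure.isProbabilityMeasure_map hδ.aemeasurable
  funext x
  rw [cdf_eq_real, measureReal_def, Measure.map_apply hδ measurableSet_Iic]
  change (P {ω | δ ω ≤ x}).toReal = _
  rcases lt_or_ge x 0 with hx | hx
  · have hzero : P {ω | δ ω ≤ 0} = 0 := by simpa using hcdf₁ 0 le_rfl hD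
    have hnull : P {ω | δ ω ≤ x} = 0 :=
      measure_mono_null (fun ω (hω : δ ω ≤ x) ↦ hω.trans hx.le) hzero
    rw [hnull, distCdf_of_nonpos hD hx.le, ENNReal.toReal_zero]
  rcases lt_or_ge x D with hxD | hxD
  · rw [hcdf₁ x hx hxD, distCdf_of_mem hD hx hxD.le, ENNReal.toReal_ofReal]
    have : x / D ≤ 1 := (div_le_one hD).2 hxD.le
    have : 0 ≤ x / D := div_nonneg hx hD.le
    nlinarith
  · rw [hcdf₂ x hxD, distCdf_of_le hD hxD, ENNReal.toReal_one]

section admissible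

variable {r ρ : ℝ}

theorem admissibleRight_le_admissibleLeft (hr : 0 ≤ r) (hρ : 0 ≤ ρ) {i j : ℕ} (hij : i < j) :
    admissibleRight r ρ i ≤ admissibleLeft r ρ j := by
  have : (i : ℝ) + 1 ≤ j := by exact_mod_cast hij
  simp only [admissibleLeft, admissibleRight]
  nlinarith

theorem admissibleLeft_le_admissibleRight (h : 2 * ρ ≤ r) (j : ℕ) :
    admissibleLeft r ρ j ≤ admissibleRight r ρ j := by
  simp only [admissibleLeft, admissibleRight]
  linarith

theorem admissibleLeft_nonneg (hr : 0 ≤ r) (hρ : 0 ≤ ρ) {j : ℕ} (hj : 1 ≤ j) :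
    0 ≤ admissibleLeft r ρ j := by
  have : (1 : ℝ) ≤ j := by exact_mod_cast hj
  simp only [admissibleLeft]
  nlinarith

end admissible

section sums

variable {D θ r ρ : ℝ}

theorem sum_Ioc_distCdf_admissible (hD : 0 < D) (hθ : 0 ≤ θ) (hρ : 0 ≤ ρ) (h2ρ : 2 * ρ ≤ r)
    (k : ℕ) (hk : θ * admissibleRight r ρ k ≤ D) :
    ∑ j ∈ Ioc 0 k, (distCdf D (θ * admissibleRight r ρ j) - distCdf D (θ * admissibleLeft r ρ j))
      = (r - 2 * ρ) * (θ / D) * (2 * k - r * θ / D * k ^ 2) := by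
  have hr : 0 ≤ r := by linarith
  induction k with
  | zero => simp
  | succ k ih =>
    have hleft : θ * admissibleLeft r ρ (k + 1) ≤ θ * admissibleRight r ρ (k + 1) :=
      mul_le_mul_of_nonneg_left (admissibleLeft_le_admissibleRight h2ρ _) hθ
    have hleft₀ : 0 ≤ θ * admissibleLeft r ρ (k + 1) :=
      mul_nonneg hθ (admissibleLeft_nonneg hr hρ k.succ_pos)
    have hk' : θ * admissibleRight r ρ k ≤ D :=
      (mul_le_mul_of_nonneg_left (admissibleRight_le_admissibleLeft hr hρ k.lt_succ_self) hθ).trans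
        (hleft.trans hk)
    rw [sum_Ioc_succ_top k.zero_le, ih hk', distCdf_of_mem hD (hleft₀.trans hleft) hk,
      distCdf_of_mem hD hleft₀ (hleft.trans hk)]
    simp only [admissibleLeft, admissibleRight]
    push_cast
    ring

theorem sum_Icc_distCdf_admissible (hD : 0 < D) (hθ : 0 ≤ θ) (hρ : 0 ≤ ρ) (h2ρ : 2 * ρ ≤ r)
    {m n : ℕ} (hm : 1 ≤ m) (hmn : m ≤ n) (hlo : θ * admissibleLeft r ρ m ≤ D)
    (hhi : D ≤ θ * admissibleRight r ρ m) :
    ∑ j ∈ Icc 1 n, (distCdf D (θ * admissibleRight r ρ j) - distCdf D (θ * admissibleLeft r ρ j))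
      = (r - 2 * ρ) * (θ / D) * (2 * ((m : ℝ) - 1) - r * θ / D * ((m : ℝ) - 1) ^ 2)
        + (1 - θ * admissibleLeft r ρ m / D) ^ 2 := by
  have hr : 0 ≤ r := by linarith
  have htail : ∑ j ∈ Ioc m n,
      (distCdf D (θ * admissibleRight r ρ j) - distCdf D (θ * admissibleLeft r ρ j)) = 0 := by
    refine sum_eq_zero fun j hj ↦ ?_
    have hleft : D ≤ θ * admissibleLeft r ρ j := hhi.trans <| mul_le_mul_of_nonneg_left
      (admissibleRight_le_admissibleLeft hr hρ (mem_Ioc.1 hj).1) hθ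
    have hright : D ≤ θ * admissibleRight r ρ j := hleft.trans <|
      mul_le_mul_of_nonneg_left (admissibleLeft_le_admissibleRight h2ρ j) hθ
    rw [distCdf_of_le hD hleft, distCdf_of_le hD hright, sub_self]
  obtain ⟨k, rfl⟩ : ∃ k, m = k + 1 := ⟨m - 1, by omega⟩
  have hhead : θ * admissibleRight r ρ k ≤ D := (mul_le_mul_of_nonneg_left
    (admissibleRight_le_admissibleLeft hr hρ k.lt_succ_self) hθ).trans hlo
  rw [show Icc 1 n = Ioc 0 n from Icc_add_one_left_eq_Ioc 0 n,
    ← sum_Ioc_consecutive _ (k + 1).zero_le hmn, htail, add_zero, sum_Ioc_succ_top k.zero_le,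
    sum_Ioc_distCdf_admissible hD hθ hρ h2ρ k hhead, distCdf_of_le hD hhi,
    distCdf_of_mem hD (mul_nonneg hθ (admissibleLeft_nonneg hr hρ hm)) hlo]
  push_cast
  ring

end sums

theorem stmt_10_general {Ω : Type*} [MeasurableSpace Ω] (P : Measure Ω) [IsProbabilityMeasure P]
    (D θ r ρ : ℝ) (hD : 0 < D) (hθ : 0 < θ) (hρ0 : 0 < ρ)
    (hρ : ρ < min 1 (r - 1))
    (δ : Ω → ℝ) (hδ : Measurable δ)
    (hcdf₁ : ∀ x : ℝ, 0 ≤ x → x < D → P {ω | δ ω ≤ x} = ENNReal.ofReal ((x / D) * (2 - x / D)))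
    (hcdf₂ : ∀ x : ℝ, D ≤ x → P {ω | δ ω ≤ x} = 1)
    (a b : ℕ → ℝ)
    (ha : ∀ j : ℕ, a j = ((j : ℝ) - 1) * r + ρ)
    (hb : ∀ j : ℕ, b j = (j : ℝ) * r - ρ)
    (N m : ℕ) (hm1 : 1 ≤ m) (hm2 : m ≤ N - 1)
    (hlo : a m < D / θ) (hhi : D / θ < b m) :
    P {ω | δ ω ∈ ⋃ j ∈ Finset.Icc 1 (N - 1), Set.Ioo (θ * a j) (θ * b j)}
      = ENNReal.ofReal ((r - 2 * ρ) * (θ / D) * (2 * ((m : ℝ) - 1) - (r * θ / D) * ((m : ℝ) - 1) ^ 2) + (1 - θ * a m / D) ^ 2) := by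
  obtain rfl : a = admissibleLeft r ρ := funext ha
  obtain rfl : b = admissibleRight r ρ := funext hb
  have h2ρ : 2 * ρ ≤ r := by linarith [lt_min_iff.1 hρ]
  have hr0 : 0 ≤ r := by linarith
  have : IsProbabilityMeasure (P.map δ) := Measure.isProbabilityMeasure_map hδ.aemeasurable
  have hcdf := cdf_map_eq_distCdf hD hδ hcdf₁ hcdf₂
  change P (δ ⁻¹' _) = _
  rw [← Measure.map_apply hδ (Finset.measurableSet_biUnion _ fun _ _ ↦ measurableSet_Ioo),
    measure_biUnion_Ioo_eq_ofReal_sum_cdf (hcdf ▸ continuous_distCdf) _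
      (pairwiseDisjoint_Ioo_of_le fun i j hij ↦ mul_le_mul_of_nonneg_left
        (admissibleRight_le_admissibleLeft hr0 hρ0.le hij) hθ.le)
      fun j _ ↦ mul_le_mul_of_nonneg_left (admissibleLeft_le_admissibleRight h2ρ j) hθ.le,
    hcdf, sum_Icc_distCdf_admissible hD hθ.le hρ0.le h2ρ hm1 hm2
      ((lt_div_iff₀' hθ).1 hlo).le ((div_lt_iff₀' hθ).1 hhi).le]

theorem stmt_10 {Ω : Type*} [MeasurableSpace Ω] (P : Measure Ω) [IsProbabilityMeasure P]
    (D θ r ρ : ℝ) (hD : 0 < D) (hθ : 0 < θ) (hr : 1 < r) (hρ0 : 0 < ρ)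
    (hρ : ρ < min 1 (r - 1))
    (δ : Ω → ℝ) (hδ : Measurable δ)
    (hcdf₁ : ∀ x : ℝ, 0 ≤ x → x < D → P {ω | δ ω ≤ x} = ENNReal.ofReal ((x / D) * (2 - x / D)))
    (hcdf₂ : ∀ x : ℝ, D ≤ x → P {ω | δ ω ≤ x} = 1)
    (a b : ℕ → ℝ)
    (ha : ∀ j : ℕ, a j = ((j : ℝ) - 1) * r + ρ)
    (hb : ∀ j : ℕ, b j = (j : ℝ) * r - ρ)
    (N m : ℕ) (hm1 : 1 ≤ m) (hm2 : m ≤ N - 1) (hN : 2 ≤ N)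
    (hlo : a m < D / θ) (hhi : D / θ < b m) :
    P {ω | δ ω ∈ ⋃ j ∈ Finset.Icc 1 (N - 1), Set.Ioo (θ * a j) (θ * b j)}
      = ENNReal.ofReal ((r - 2 * ρ) * (θ / D) * (2 * ((m : ℝ) - 1) - (r * θ / D) * ((m : ℝ) - 1) ^ 2) + (1 - θ * a m / D) ^ 2) :=
  stmt_10_general P D θ r ρ hD hθ hρ0 hρ δ hδ hcdf₁ hcdf₂ a b ha hb N m hm1 hm2 hlo hhi
end
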